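/- arXiv:1811.11989 — 3 statements merged into one kernel-verified Lean document; each statement's English description precedes it below -/
import Mathlib

section
/- Let g ∈ R^d, H ∈ R^{d×d} symmetric, θ > 0, and let h* be a global minimizer of m(h) = ⟨g,h⟩ + (1/2)⟨Hh,h⟩ + (θ/6)‖h‖^3. Then H + (θ/2)‖h*‖ I is positive semidefinite. -/
/-!
At a global minimizer `h` of the cubic model `m = cubicModel g A θ`, the first-order condition reads
`g = -(A + λ) h` with `λ = θ ‖h‖ / 2`. Substituting it, for `‖h + u‖ = ‖h‖` the cubic terms cancel
and `m (h + u) - m h = ⟪(A + λ) u, u⟫ / 2`, so the quadratic form of `A + λ` is nonnegative on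
every `u` that moves `h` along the sphere of radius `‖h‖`. Every direction `w` with `⟪h, w⟫ ≠ 0`
is a nonzero multiple of such a `u`, and the remaining directions follow by continuity. When
`h = 0` (so `λ = 0` and `g = 0`), dividing `m (s • w) - m 0 ≥ 0` by `s ^ 2` and letting
`s → 0⁺` gives `⟪A w, w⟫ ≥ 0`.
-/

open RealInnerProductSpace

variable {E : Type*} [NormedAddCommGroup E] [InnerProductSpace ℝ E]

noncomputable def cubicModel (g : E) (A : E →L[ℝ] E) (θ : ℝ) (h : E) : ℝ :=
  ⟪g, h⟫ + (1 / 2) * ⟪A h, h⟫ + (θ / 6) * ‖h‖ ^ 3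

variable {g : E} {A : E →L[ℝ] E} {θ : ℝ}

theorem hasFDerivAt_norm_pow_three (h : E) :
    HasFDerivAt (fun x : E ↦ ‖x‖ ^ 3) ((3 * ‖h‖) • innerSL ℝ h) h := by
  simpa [Real.rpow_natCast, show (3 : ℝ) - 2 = 1 by norm_num] using
    hasFDerivAt_norm_rpow h (p := 3) (by norm_num)

theorem hasFDerivAt_cubicModel (hA : (A : E →ₗ[ℝ] E).IsSymmetric) (h : E) :
    HasFDerivAt (cubicModel g A θ)
      (innerSL ℝ (g + (A + (θ / 2 * ‖h‖) • 1) h)) h := by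
  have hquad : HasFDerivAt (fun x : E ↦ ⟪A x, x⟫) (2 • innerSL ℝ (A h)) h :=
    (A.hasFDerivAt.inner ℝ (hasFDerivAt_id h)).congr_fderiv <| by
      ext v
      simp only [ContinuousLinearMap.comp_apply, ContinuousLinearMap.prod_apply,
        ContinuousLinearMap.id_apply, id_eq, fderivInnerCLM_apply, two_smul, add_apply,
        coe_innerSL_apply, add_right_inj]
      exact (hA v h).trans (real_inner_comm _ _)
  refine ((((innerSL ℝ g).hasFDerivAt).add (hquad.const_mul (1 / 2))).add
    ((hasFDerivAt_norm_pow_three h).const_mul (θ / 6))).congr_fderiv ?_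
  ext v
  simp only [add_apply, smul_apply, one_apply_eq_self, map_add, map_smul, coe_innerSL_apply,
    nsmul_eq_mul, smul_eq_mul, Nat.cast_ofNat]
  ring

theorem IsLocalMin.cubicModel_gradient_eq_zero (hA : (A : E →ₗ[ℝ] E).IsSymmetric) {h : E}
    (hmin : IsLocalMin (cubicModel g A θ) h) : g + (A + (θ / 2 * ‖h‖) • 1) h = 0 := by
  have hderiv := hmin.hasFDerivAt_eq_zero (hasFDerivAt_cubicModel hA h)
  exact innerSL_inj.mp (hderiv.trans (map_zero _).symm)

theorem cubicModel_add_sub_of_gradient_eq_zero (hA : (A : E →ₗ[ℝ] E).IsSymmetric) {h : E}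
    (hgrad : g + (A + (θ / 2 * ‖h‖) • 1) h = 0) (u : E) :
    cubicModel g A θ (h + u) - cubicModel g A θ h =
      ⟪(A + (θ / 2 * ‖h‖) • 1) u, u⟫ / 2 + θ / 6 * (‖h + u‖ ^ 3 - ‖h‖ ^ 3)
        - θ / 4 * ‖h‖ * (‖h + u‖ ^ 2 - ‖h‖ ^ 2) := by
  rw [eq_neg_of_add_eq_zero_left hgrad]
  have hAuh : ⟪A u, h⟫ = ⟪A h, u⟫ := (hA u h).trans (real_inner_comm _ _)
  simp only [cubicModel, map_add, inner_add_left, inner_add_right, inner_neg_left,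
    add_apply, smul_apply, one_apply_eq_self,
    real_inner_smul_left, norm_add_sq_real, real_inner_self_eq_norm_sq, hAuh]
  ring

theorem exists_ne_zero_norm_add_smul_eq {h w : E} (hw : ⟪h, w⟫ ≠ 0) :
    ∃ t : ℝ, t ≠ 0 ∧ ‖h + t • w‖ = ‖h‖ := by
  have hw0 : ‖w‖ ≠ 0 := by
    rintro hw0
    exact hw (by rw [norm_eq_zero.mp hw0, inner_zero_right])
  refine ⟨-2 * ⟪h, w⟫ / ‖w‖ ^ 2, by simp [hw, hw0], ?_⟩
  rw [← sq_eq_sq₀ (norm_nonneg _) (norm_nonneg _), norm_add_sq_real, real_inner_smul_right,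
    norm_smul, Real.norm_eq_abs, mul_pow, sq_abs]
  field_simp
  ring

theorem Continuous.nonneg_of_forall_pos {f : ℝ → ℝ} (hf : Continuous f)
    (hpos : ∀ s, 0 < s → 0 ≤ f s) : 0 ≤ f 0 :=
  ge_of_tendsto ((hf.tendsto 0).mono_left nhdsWithin_le_nhds)
    (eventually_nhdsWithin_of_forall (s := Set.Ioi 0) hpos)

theorem inner_apply_self_nonneg_of_forall_cubicModel_zero_le
    (hA : (A : E →ₗ[ℝ] E).IsSymmetric) (hmin : ∀ x, cubicModel g A θ 0 ≤ cubicModel g A θ x)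
    (w : E) : 0 ≤ ⟪A w, w⟫ := by
  have hg : g = 0 := by
    simpa using IsLocalMin.cubicModel_gradient_eq_zero hA (Filter.Eventually.of_forall hmin)
  suffices 0 ≤ ⟪A w, w⟫ / 2 + θ / 6 * 0 * ‖w‖ ^ 3 by linarith
  refine Continuous.nonneg_of_forall_pos (f := fun s ↦ ⟪A w, w⟫ / 2 + θ / 6 * s * ‖w‖ ^ 3)
    (by fun_prop) fun s hs ↦ nonneg_of_mul_nonneg_right ?_ (by positivity : 0 < s ^ 2)
  have hscale := hmin (s • w)
  simp only [cubicModel, hg, inner_zero_left, map_zero, inner_zero_right, norm_zero, map_smul,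
    real_inner_smul_left, real_inner_smul_right, norm_smul, Real.norm_of_nonneg hs.le] at hscale
  linarith

section Minimizer

variable {h : E} (hA : (A : E →ₗ[ℝ] E).IsSymmetric)
  (hmin : ∀ x, cubicModel g A θ h ≤ cubicModel g A θ x)
include hA hmin

theorem inner_add_smul_one_nonneg_of_norm_add_eq {u : E} (hu : ‖h + u‖ = ‖h‖) :
    0 ≤ ⟪(A + (θ / 2 * ‖h‖) • 1) u, u⟫ := by
  have hexp := cubicModel_add_sub_of_gradient_eq_zero hA
    (IsLocalMin.cubicModel_gradient_eq_zero hA (Filter.Eventually.of_forall hmin)) u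
  rw [hu, sub_self, sub_self, mul_zero, mul_zero, sub_zero, add_zero] at hexp
  linarith [hmin (h + u)]

theorem inner_add_smul_one_nonneg_of_inner_ne_zero {w : E} (hw : ⟪h, w⟫ ≠ 0) :
    0 ≤ ⟪(A + (θ / 2 * ‖h‖) • 1) w, w⟫ := by
  obtain ⟨t, ht, hnorm⟩ := exists_ne_zero_norm_add_smul_eq hw
  have := inner_add_smul_one_nonneg_of_norm_add_eq hA hmin hnorm
  rw [map_smul, real_inner_smul_left, real_inner_smul_right, ← mul_assoc] at this
  exact nonneg_of_mul_nonneg_right this (mul_self_pos.mpr ht)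

theorem inner_add_smul_one_nonneg (w : E) : 0 ≤ ⟪(A + (θ / 2 * ‖h‖) • 1) w, w⟫ := by
  rcases eq_or_ne h 0 with rfl | hh
  · simpa using inner_apply_self_nonneg_of_forall_cubicModel_zero_le hA hmin w
  by_cases hw : ⟪h, w⟫ = 0
  · simpa using Continuous.nonneg_of_forall_pos
      (f := fun ε : ℝ ↦ ⟪(A + (θ / 2 * ‖h‖) • 1) (w + ε • h), w + ε • h⟫) (by fun_prop)
      fun ε hε ↦ inner_add_smul_one_nonneg_of_inner_ne_zero hA hmin <| by
        rw [inner_add_right, hw, zero_add, real_inner_smul_right, real_inner_self_eq_norm_sq]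
        positivity
  · exact inner_add_smul_one_nonneg_of_inner_ne_zero hA hmin hw

theorem isPositive_add_smul_one_of_forall_cubicModel_le :
    (A + (θ / 2 * ‖h‖) • 1).IsPositive :=
  ⟨hA.add (LinearMap.IsSymmetric.id.smul (conj_trivial _)),
    fun w ↦ by
      simpa [ContinuousLinearMap.reApplyInnerSelf] using inner_add_smul_one_nonneg hA hmin w⟩

end Minimizer

theorem stmt_7_general {d : ℕ} (g : EuclideanSpace ℝ (Fin d)) (H : Matrix (Fin d) (Fin d) ℝ)
    (hH : H.IsSymm) (θ : ℝ) (hstar : EuclideanSpace ℝ (Fin d))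
    (hmin : ∀ h : EuclideanSpace ℝ (Fin d),
      ⟪g, hstar⟫ + (1 / 2) * ⟪(Matrix.toEuclideanCLM (𝕜 := ℝ) H) hstar, hstar⟫
          + (θ / 6) * ‖hstar‖ ^ 3 ≤
        ⟪g, h⟫ + (1 / 2) * ⟪(Matrix.toEuclideanCLM (𝕜 := ℝ) H) h, h⟫ + (θ / 6) * ‖h‖ ^ 3) :
    (H + ((θ / 2) * ‖hstar‖) • (1 : Matrix (Fin d) (Fin d) ℝ)).PosSemidef := by
  have hA : (Matrix.toEuclideanCLM (𝕜 := ℝ) H :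
      EuclideanSpace ℝ (Fin d) →ₗ[ℝ] EuclideanSpace ℝ (Fin d)).IsSymmetric := by
    rw [Matrix.coe_toEuclideanCLM_eq_toEuclideanLin]
    exact Matrix.isSymmetric_toEuclideanLin_iff.mpr (Matrix.isHermitian_iff_isSymm.mpr hH)
  rw [← Matrix.isPositive_toEuclideanLin_iff, ← Matrix.coe_toEuclideanCLM_eq_toEuclideanLin,
    ContinuousLinearMap.isPositive_toLinearMap_iff, map_add, map_smul, map_one]
  exact isPositive_add_smul_one_of_forall_cubicModel_le hA hmin

theorem stmt_7 {d : ℕ} (g : EuclideanSpace ℝ (Fin d)) (H : Matrix (Fin d) (Fin d) ℝ)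
    (hH : H.IsSymm) (θ : ℝ) (hθ : 0 < θ) (hstar : EuclideanSpace ℝ (Fin d))
    (hmin : ∀ h : EuclideanSpace ℝ (Fin d),
      ⟪g, hstar⟫ + (1 / 2) * ⟪(Matrix.toEuclideanCLM (𝕜 := ℝ) H) hstar, hstar⟫
          + (θ / 6) * ‖hstar‖ ^ 3 ≤
        ⟪g, h⟫ + (1 / 2) * ⟪(Matrix.toEuclideanCLM (𝕜 := ℝ) H) h, h⟫ + (θ / 6) * ‖h‖ ^ 3) :
    (H + ((θ / 2) * ‖hstar‖) • (1 : Matrix (Fin d) (Fin d) ℝ)).PosSemidef :=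
  stmt_7_general g H hH θ hstar hmin
end

section
/- Let g ∈ R^d, H ∈ R^{d×d} symmetric, θ > 0, and let h* be a global minimizer of m(h) = ⟨g,h⟩ + (1/2)⟨Hh,h⟩ + (θ/6)‖h‖^3. Then m(h*) ≤ -(θ/12)‖h*‖^3. -/
open RealInnerProductSpace

theorem stmt_8 {d : ℕ} (g : EuclideanSpace ℝ (Fin d)) (H : Matrix (Fin d) (Fin d) ℝ)
    (hH : H.IsSymm) (θ : ℝ) (hθ : 0 < θ) (hstar : EuclideanSpace ℝ (Fin d))
    (hmin : ∀ h : EuclideanSpace ℝ (Fin d),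
      ⟪g, hstar⟫ + (1 / 2) * ⟪(Matrix.toEuclideanCLM (𝕜 := ℝ) H) hstar, hstar⟫
          + (θ / 6) * ‖hstar‖ ^ 3 ≤
        ⟪g, h⟫ + (1 / 2) * ⟪(Matrix.toEuclideanCLM (𝕜 := ℝ) H) h, h⟫ + (θ / 6) * ‖h‖ ^ 3) :
    ⟪g, hstar⟫ + (1 / 2) * ⟪(Matrix.toEuclideanCLM (𝕜 := ℝ) H) hstar, hstar⟫
        + (θ / 6) * ‖hstar‖ ^ 3 ≤ -(θ / 12) * ‖hstar‖ ^ 3 := by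
  set M := Matrix.toEuclideanCLM (𝕜 := ℝ) H with hM
  set a : ℝ := ⟪g, hstar⟫ with ha
  set b : ℝ := ⟪M hstar, hstar⟫ with hb
  set s : ℝ := ‖hstar‖ with hs
  have hs0 : 0 ≤ s := norm_nonneg _
  have hc0 : 0 ≤ θ / 6 * s ^ 3 := by positivity
  -- evaluate the minimality condition at t • hstar, t ≥ 0
  have key : ∀ t : ℝ, 0 ≤ t →
      a + 1 / 2 * b + θ / 6 * s ^ 3 ≤ t * a + t ^ 2 * (1 / 2 * b) + t ^ 3 * (θ / 6 * s ^ 3) := by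
    intro t ht
    have h1 := hmin (t • hstar)
    have e1 : ⟪g, t • hstar⟫ = t * a := real_inner_smul_right _ _ _
    have e2 : M (t • hstar) = t • M hstar := map_smul M t hstar
    have e3 : ⟪M (t • hstar), t • hstar⟫ = t ^ 2 * b := by
      rw [e2, real_inner_smul_left, real_inner_smul_right, ← hb]; ring
    have e4 : ‖t • hstar‖ = t * s := by
      rw [norm_smul, Real.norm_eq_abs, abs_of_nonneg ht, ← hs]
    rw [e1, e3, e4] at h1
    calc a + 1 / 2 * b + θ / 6 * s ^ 3 ≤
        t * a + 1 / 2 * (t ^ 2 * b) + θ / 6 * (t * s) ^ 3 := h1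
      _ = t * a + t ^ 2 * (1 / 2 * b) + t ^ 3 * (θ / 6 * s ^ 3) := by ring
  -- evaluate at -hstar : a ≤ 0
  have haneg : a ≤ 0 := by
    have h1 := hmin (-hstar)
    have e1 : ⟪g, -hstar⟫ = -a := by rw [inner_neg_right, ← ha]
    have e2 : ⟪M (-hstar), -hstar⟫ = b := by
      rw [map_neg, inner_neg_neg, ← hb]
    have e4 : ‖-hstar‖ = s := by rw [norm_neg, ← hs]
    rw [e1, e2, e4] at h1
    linarith
  -- first order condition: a + b + (θ/2) s^3 ≤ 0
  have quad : ∀ ε : ℝ, ε ∈ Set.Ioo (0 : ℝ) 1 →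
      a + (2 - ε) * (1 / 2 * b) + (3 - 3 * ε + ε ^ 2) * (θ / 6 * s ^ 3) ≤ 0 := by
    intro ε hε
    obtain ⟨hε0, hε1⟩ := hε
    have h1 := key (1 - ε) (by linarith)
    nlinarith [h1, mul_pos hε0 hε0]
  have lim : Filter.Tendsto
      (fun ε : ℝ => a + (2 - ε) * (1 / 2 * b) + (3 - 3 * ε + ε ^ 2) * (θ / 6 * s ^ 3))
      (nhdsWithin 0 (Set.Ioi 0)) (nhds (a + 2 * (1 / 2 * b) + 3 * (θ / 6 * s ^ 3))) := by
    have hcont : Continuous (fun ε : ℝ => a + (2 - ε) * (1 / 2 * b)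
        + (3 - 3 * ε + ε ^ 2) * (θ / 6 * s ^ 3)) := by fun_prop
    exact (hcont.tendsto' 0 _ (by norm_num)).mono_left nhdsWithin_le_nhds
  have foc : a + 2 * (1 / 2 * b) + 3 * (θ / 6 * s ^ 3) ≤ 0 := by
    refine le_of_tendsto lim ?_
    filter_upwards [Ioo_mem_nhdsGT_of_mem (by norm_num : (0:ℝ) ∈ Set.Ico 0 1)] with ε hε
    exact quad ε hε
  have goal_eq : -(θ / 12) * s ^ 3 = -(1 / 2) * (θ / 6 * s ^ 3) := by ring
  rw [goal_eq]
  linarith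
end

section
/- Let F: R^d → R be twice differentiable with L_2-Lipschitz Hessian. For any x, h ∈ R^d, any vector v and symmetric matrix U, and any M > 0, if h is a critical point of m(u) = ⟨v,u⟩ + (1/2)⟨Uu,u⟩ + (M/6)‖u‖^3 (i.e. v + Uh + (M/2)‖h‖h = 0), then ‖∇F(x+h)‖ ≤ ((L_2 + 2M)/2)‖h‖^2 + ‖∇F(x) - v‖ + (1/(2M))‖∇²F(x) - U‖_op². -/
/-! The gradient at `x + h` splits as the Taylor remainder of `∇F` at `x`, plus `(∇²F(x) - U) h`,
plus `∇F(x) - v`, minus `(M/2)‖h‖ h`, the last three coming from the critical-point equation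
`v + U h + (M/2)‖h‖ h = 0`. The remainder is at most `(L₂/2)‖h‖²` because the Hessian is
`L₂`-Lipschitz, the middle term is split by `ab ≤ a²/(2M) + (M/2)b²`, and the last term has norm
`(M/2)‖h‖²`. -/

open Set

section Taylor

variable {E F : Type*} [NormedAddCommGroup E] [NormedSpace ℝ E]
  [NormedAddCommGroup F] [NormedSpace ℝ F]

theorem norm_sub_sub_fderiv_apply_le_of_lipschitz_fderiv {f : E → F} {L : ℝ}
    (hf : Differentiable ℝ f) (hLip : ∀ x y, ‖fderiv ℝ f x - fderiv ℝ f y‖ ≤ L * ‖x - y‖)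
    (x h : E) : ‖f (x + h) - f x - fderiv ℝ f x h‖ ≤ L / 2 * ‖h‖ ^ 2 := by
  set g : ℝ → F := fun t => f (x + t • h) - f x - t • fderiv ℝ f x h
  have hg : ∀ t, HasDerivAt g (fderiv ℝ f (x + t • h) h - fderiv ℝ f x h) t := by
    intro t
    have hline : HasDerivAt (fun t : ℝ => x + t • h) h t := by
      simpa using ((hasDerivAt_id t).smul_const h).const_add x
    have hcomp := (hf (x + t • h)).hasFDerivAt.comp_hasDerivAt t hline
    convert (hcomp.sub_const (f x)).sub ((hasDerivAt_id t).smul_const (fderiv ℝ f x h)) using 1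
    · rfl
    · rw [one_smul]
  have hg' : ∀ t ∈ Ico (0 : ℝ) 1,
      ‖fderiv ℝ f (x + t • h) h - fderiv ℝ f x h‖ ≤ L * ‖h‖ ^ 2 * t := by
    intro t ht
    calc ‖fderiv ℝ f (x + t • h) h - fderiv ℝ f x h‖
        ≤ ‖fderiv ℝ f (x + t • h) - fderiv ℝ f x‖ * ‖h‖ :=
          (fderiv ℝ f (x + t • h) - fderiv ℝ f x).le_opNorm h
      _ ≤ L * ‖t • h‖ * ‖h‖ := by
          gcongr
          simpa using hLip (x + t • h) x
      _ = L * ‖h‖ ^ 2 * t := by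
          rw [norm_smul, Real.norm_of_nonneg ht.1]
          ring
  have hB : ∀ t, HasDerivAt (fun t : ℝ => L / 2 * ‖h‖ ^ 2 * t ^ 2) (L * ‖h‖ ^ 2 * t) t :=
    fun t => ((hasDerivAt_pow 2 t).const_mul (L / 2 * ‖h‖ ^ 2)).congr_deriv (by ring)
  have hbound := image_norm_le_of_norm_deriv_right_le_deriv_boundary
    (fun t _ => (hg t).continuousAt.continuousWithinAt) (fun t _ => (hg t).hasDerivWithinAt)
    (by simp [g]) hB hg' (right_mem_Icc.2 zero_le_one)
  simpa [g] using hbound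

end Taylor

theorem mul_le_div_mul_sq_add_mul_sq {M : ℝ} (hM : 0 < M) (a b : ℝ) :
    a * b ≤ 1 / (2 * M) * a ^ 2 + M / 2 * b ^ 2 := by
  have hsq : 0 ≤ (a - M * b) ^ 2 / (2 * M) := by positivity
  have : 1 / (2 * M) * a ^ 2 + M / 2 * b ^ 2 - a * b = (a - M * b) ^ 2 / (2 * M) := by
    field_simp
    ring
  linarith

theorem stmt_9_general {d : ℕ} (F : EuclideanSpace ℝ (Fin d) → ℝ) (L₂ : ℝ)
    (hF' : Differentiable ℝ (gradient F))
    (hLip : ∀ x y, ‖fderiv ℝ (gradient F) x - fderiv ℝ (gradient F) y‖ ≤ L₂ * ‖x - y‖)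
    (x h v : EuclideanSpace ℝ (Fin d))
    (U : EuclideanSpace ℝ (Fin d) →L[ℝ] EuclideanSpace ℝ (Fin d))
    (M : ℝ) (hM : 0 < M)
    (hcrit : v + U h + ((M / 2) * ‖h‖) • h = 0) :
    ‖gradient F (x + h)‖ ≤ (L₂ + 2 * M) / 2 * ‖h‖ ^ 2 + ‖gradient F x - v‖
      + (1 / (2 * M)) * ‖fderiv ℝ (gradient F) x - U‖ ^ 2 := by
  set H := fderiv ℝ (gradient F) x
  set R := gradient F (x + h) - gradient F x - H h
  have hR : ‖R‖ ≤ L₂ / 2 * ‖h‖ ^ 2 :=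
    norm_sub_sub_fderiv_apply_le_of_lipschitz_fderiv hF' hLip x h
  have hdecomp :
      gradient F (x + h) = R + (H - U) h + (gradient F x - v) - ((M / 2) * ‖h‖) • h := by
    rw [sub_apply, eq_sub_of_add_eq (eq_neg_of_add_eq_zero_left hcrit)]
    simp only [R]
    abel
  have hHU : ‖(H - U) h‖ ≤ 1 / (2 * M) * ‖H - U‖ ^ 2 + M / 2 * ‖h‖ ^ 2 :=
    ((H - U).le_opNorm h).trans (mul_le_div_mul_sq_add_mul_sq hM _ _)
  have hcubic : ‖((M / 2) * ‖h‖) • h‖ = M / 2 * ‖h‖ ^ 2 := by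
    rw [norm_smul, Real.norm_of_nonneg (by positivity)]
    ring
  calc ‖gradient F (x + h)‖
      ≤ ‖R‖ + ‖(H - U) h‖ + ‖gradient F x - v‖ + ‖((M / 2) * ‖h‖) • h‖ := by
        rw [hdecomp]
        exact (norm_sub_le _ _).trans (by gcongr; exact norm_add₃_le)
    _ ≤ (L₂ + 2 * M) / 2 * ‖h‖ ^ 2 + ‖gradient F x - v‖ + 1 / (2 * M) * ‖H - U‖ ^ 2 := by
        linarith

theorem stmt_9 {d : ℕ} (F : EuclideanSpace ℝ (Fin d) → ℝ) (L₂ : ℝ)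
    (hF : Differentiable ℝ F) (hF' : Differentiable ℝ (gradient F))
    (hLip : ∀ x y, ‖fderiv ℝ (gradient F) x - fderiv ℝ (gradient F) y‖ ≤ L₂ * ‖x - y‖)
    (x h v : EuclideanSpace ℝ (Fin d))
    (U : EuclideanSpace ℝ (Fin d) →L[ℝ] EuclideanSpace ℝ (Fin d)) (hU : IsSelfAdjoint U)
    (M : ℝ) (hM : 0 < M)
    (hcrit : v + U h + ((M / 2) * ‖h‖) • h = 0) :
    ‖gradient F (x + h)‖ ≤ (L₂ + 2 * M) / 2 * ‖h‖ ^ 2 + ‖gradient F x - v‖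
      + (1 / (2 * M)) * ‖fderiv ℝ (gradient F) x - U‖ ^ 2 :=
  stmt_9_general F L₂ hF' hLip x h v U M hM hcrit
end
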